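/- Let G be a connected finite graph (multiple edges allowed, no loops) that is not a regular bipartite graph, let w be a vertex of G, and let λ ∈ {0,1}. Then G has a spanning weakly even (w,λ)-tree, i.e., a spanning tree T such that in the bipartition of T in which w lies in the part of type λ, every leaf of T whose degree in G equals the maximum degree Δ(G) lies in the type-0 part. -/

import Mathlib

/-- A multigraph on vertex type `V` with edge type `E`: each edge is assigned an
unordered pair of distinct endpoints (multiple edges allowed, no loops). -/
structure Multigraph (V : Type) (E : Type) where
  inc : E → Sym2 V
  loopless : ∀ e : E, ¬ (inc e).IsDiag

namespace Multigraph

variable {V E : Type}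

/-- `u` and `v` are joined by an edge belonging to the edge set `S`. -/
def AdjOn (G : Multigraph V E) (S : Set E) (u v : V) : Prop :=
  ∃ e ∈ S, G.inc e = s(u, v)

/-- `v` is reachable from `u` using edges in `S`. -/
def ReachOn (G : Multigraph V E) (S : Set E) (u v : V) : Prop :=
  Relation.ReflTransGen (G.AdjOn S) u v

/-- `G` is connected. -/
def Connected (G : Multigraph V E) : Prop :=
  Nonempty V ∧ ∀ u v : V, G.ReachOn Set.univ u v

/-- The degree of `v` in the spanning subgraph with edge set `S`. -/
noncomputable def degOn (G : Multigraph V E) (S : Set E) (v : V) : ℕ :=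
  {e ∈ S | v ∈ G.inc e}.ncard

/-- The degree of `v` in `G`. -/
noncomputable def degree (G : Multigraph V E) (v : V) : ℕ :=
  G.degOn Set.univ v

/-- The maximum degree `Δ(G)`. -/
noncomputable def maxDegree (G : Multigraph V E) [Fintype V] : ℕ :=
  Finset.univ.sup G.degree

/-- `G` is regular. -/
def IsRegular (G : Multigraph V E) : Prop :=
  ∃ r : ℕ, ∀ v : V, G.degree v = r

/-- The 2-colouring `c` is proper on the edge set `S`: the two endpoints of any
edge of `S` receive different colours. -/
def ProperOn (G : Multigraph V E) (S : Set E) (c : V → Bool) : Prop :=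
  ∀ e ∈ S, ∀ u v : V, G.inc e = s(u, v) → c u ≠ c v

/-- `G` is bipartite. -/
def IsBipartite (G : Multigraph V E) : Prop :=
  ∃ c : V → Bool, G.ProperOn Set.univ c

/-- The sub-multigraph of `G` with vertex set `U` and edge set `S` is a tree:
`U` is nonempty, every edge of `S` joins vertices of `U`, any two vertices of `U`
are joined by a walk using edges of `S`, and there are exactly `|U| - 1` edges
(which forces acyclicity, and in particular forbids parallel edges in `S`). -/
structure IsTree (G : Multigraph V E) (U : Set V) (S : Set E) : Prop where
  nonempty : U.Nonempty
  edges_in : ∀ e ∈ S, ∀ v : V, v ∈ G.inc e → v ∈ U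
  conn : ∀ u ∈ U, ∀ v ∈ U, G.ReachOn S u v
  card_eq : S.ncard + 1 = U.ncard

/-- `v` is a leaf of the subgraph with edge set `S`. -/
def IsLeaf (G : Multigraph V E) (S : Set E) (v : V) : Prop :=
  G.degOn S v = 1

/-- `e` is a cutedge: after removing `e`, some pair of vertices is separated. -/
def IsCutedge (G : Multigraph V E) (e : E) : Prop :=
  ∃ u v : V, ¬ G.ReachOn {e}ᶜ u v

/-- `G` is 2-edge-connected: connected and without cutedges. -/
def TwoEdgeConnected (G : Multigraph V E) : Prop :=
  G.Connected ∧ ∀ e : E, ¬ G.IsCutedge e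

/-- The edge set `S` is a weak 2-factor of `G`: every vertex has degree at most
2 in `S` (equivalently, every component of the spanning subgraph is a path —
possibly a single vertex — or a cycle), and every vertex of degree less than 2
in `S` (i.e. every endvertex of a path component) has degree less than `Δ(G)`
in `G`. -/
def IsWeakTwoFactor (G : Multigraph V E) [Fintype V] (S : Set E) : Prop :=
  ∀ v : V, G.degOn S v ≤ 2 ∧ (G.degOn S v < 2 → G.degree v < G.maxDegree)

end Multigraph

/-! Colour the vertices greedily from `w` so that the `true` vertices are independent and the
bichromatic edges connect `G`. A spanning tree made of bichromatic edges is then properly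
coloured by this colouring, so it suffices to find one in which every `true` vertex of degree `Δ`
has degree at least two. Such a tree exists by Rado's theorem for the cycle matroid. Its rank
condition says that in every component of the edges at a set `W` of such vertices, the vertices
outside `W` outnumber those in `W`; if this failed, double counting would make `G` a
`Δ`-regular bipartite graph. -/

namespace Multigraph

variable {V E : Type} {G : Multigraph V E}

section Reachability

theorem exists_inc_eq (G : Multigraph V E) (e : E) : ∃ u v, u ≠ v ∧ G.inc e = s(u, v) := by
  induction h : G.inc e using Sym2.ind with
  | _ u v => exact ⟨u, v, fun huv => G.loopless e (by simp [h, huv]), rfl⟩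

theorem ne_of_inc_eq {e : E} {u v : V} (h : G.inc e = s(u, v)) : u ≠ v := fun huv =>
  G.loopless e (by simp [h, huv])

variable {S T X : Set E} {e : E} {u v x a b : V}

theorem AdjOn.symm (h : G.AdjOn S u v) : G.AdjOn S v u :=
  let ⟨e, he, h⟩ := h; ⟨e, he, h.trans Sym2.eq_swap⟩

theorem ReachOn.rfl : G.ReachOn S u u := Relation.ReflTransGen.refl

theorem ReachOn.trans (h : G.ReachOn S u v) (h' : G.ReachOn S v x) : G.ReachOn S u x :=
  Relation.ReflTransGen.trans h h'

theorem ReachOn.symm (h : G.ReachOn S u v) : G.ReachOn S v u := by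
  induction h with
  | refl => exact .rfl
  | tail _ hyz ih => exact Relation.ReflTransGen.head hyz.symm ih

theorem reachOn_comm : G.ReachOn S u v ↔ G.ReachOn S v u := ⟨.symm, .symm⟩

theorem ReachOn.mono (hST : S ⊆ T) (h : G.ReachOn S u v) : G.ReachOn T u v :=
  Relation.ReflTransGen.mono (fun _ _ ⟨e, he, h⟩ => ⟨e, hST he, h⟩) _ _ h

theorem reachOn_of_inc_eq (he : e ∈ S) (h : G.inc e = s(u, v)) : G.ReachOn S u v :=
  Relation.ReflTransGen.single ⟨e, he, h⟩

theorem ReachOn.exists_inc_eq_mem_notMem {U : Set V} (h : G.ReachOn S u v) (hu : u ∈ U)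
    (hv : v ∉ U) : ∃ e ∈ S, ∃ a b, G.inc e = s(a, b) ∧ a ∈ U ∧ b ∉ U := by
  induction h with
  | refl => exact absurd hu hv
  | @tail y z _ hyz ih =>
    by_cases hy : y ∈ U
    · obtain ⟨e, he, h⟩ := hyz
      exact ⟨e, he, y, z, h, hy, hv⟩
    · exact ih hy

theorem Connected.eq_univ_of_closed (hconn : G.Connected) {U : Set V} (hne : U.Nonempty)
    (hU : ∀ e a b, G.inc e = s(a, b) → a ∈ U → b ∈ U) : U = Set.univ := by
  refine Set.eq_univ_of_forall fun v => by_contra fun hv => ?_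
  obtain ⟨u, hu⟩ := hne
  obtain ⟨e, -, a, b, h, ha, hb⟩ := (hconn.2 u v).exists_inc_eq_mem_notMem hu hv
  exact hb (hU e a b h ha)

/-- `e` lies in the closure of `T` in the cycle matroid. -/
def Spans (G : Multigraph V E) (T : Set E) (e : E) : Prop :=
  ∀ u v, G.inc e = s(u, v) → G.ReachOn T u v

theorem spans_of_mem (he : e ∈ S) : G.Spans S e := fun _ _ => reachOn_of_inc_eq he

theorem Spans.mono (hST : S ⊆ T) (h : G.Spans S e) : G.Spans T e := fun u v huv =>
  (h u v huv).mono hST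

theorem ReachOn.of_union (hX : ∀ e ∈ X, G.Spans S e) (h : G.ReachOn (S ∪ X) u v) :
    G.ReachOn S u v := by
  induction h with
  | refl => exact .rfl
  | tail _ hyz ih =>
    obtain ⟨e, he | he, h⟩ := hyz
    exacts [ih.trans (reachOn_of_inc_eq he h), ih.trans (hX e he _ _ h)]

theorem ReachOn.of_insert (he : G.inc e = s(a, b)) (h : G.ReachOn (insert e S) u v) :
    G.ReachOn S u v ∨ (G.ReachOn S u a ∨ G.ReachOn S u b) ∧
      (G.ReachOn S a v ∨ G.ReachOn S b v) := by
  induction h with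
  | refl => exact .inl .rfl
  | @tail y z _ hyz ih =>
    obtain ⟨g, rfl | hg, h⟩ := hyz
    · rw [he, Sym2.eq_iff] at h
      rcases h with ⟨rfl, rfl⟩ | ⟨rfl, rfl⟩ <;>
        rcases ih with ih | ⟨ih, -⟩ <;> simp [ih, ReachOn.rfl]
    · have hyz := reachOn_of_inc_eq hg h
      rcases ih with ih | ⟨hu, ih | ih⟩
      exacts [.inl (ih.trans hyz), .inr ⟨hu, .inl (ih.trans hyz)⟩,
        .inr ⟨hu, .inr (ih.trans hyz)⟩]

end Reachability

section Components

variable {S T X : Set E} {e : E} {u v a b : V}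

def component (G : Multigraph V E) (S : Set E) (v : V) : Set V := {u | G.ReachOn S v u}

noncomputable def numComponents (G : Multigraph V E) (S : Set E) : ℕ :=
  (Set.range (G.component S)).ncard

theorem component_eq_component_iff : G.component S u = G.component S v ↔ G.ReachOn S u v := by
  refine ⟨fun h => (h ▸ ReachOn.rfl : v ∈ G.component S u), fun h => ?_⟩
  ext x
  exact ⟨fun hx => h.symm.trans hx, fun hx => h.trans hx⟩

theorem component_eq_biUnion (hST : S ⊆ T) (v : V) :
    G.component T v = ⋃ x ∈ G.component S v, G.component T x := by
  ext u
  simp only [Set.mem_iUnion]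
  exact ⟨fun h => ⟨v, .rfl, h⟩, fun ⟨x, hvx, hxu⟩ => (hvx.mono hST).trans hxu⟩

theorem range_component_eq_image (hST : S ⊆ T) :
    Set.range (G.component T) =
      (fun C => ⋃ x ∈ C, G.component T x) '' Set.range (G.component S) := by
  rw [← Set.range_comp]
  exact congrArg Set.range (funext (component_eq_biUnion hST))

theorem component_union_of_forall_spans (hX : ∀ e ∈ X, G.Spans S e) :
    G.component (S ∪ X) = G.component S := by
  funext v
  ext u
  exact ⟨.of_union hX, .mono Set.subset_union_left⟩

theorem spans_iff (he : G.inc e = s(a, b)) : G.Spans S e ↔ G.ReachOn S a b := by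
  refine ⟨fun h => h a b he, fun h u v huv => ?_⟩
  rcases Sym2.eq_iff.mp (he.symm.trans huv) with ⟨rfl, rfl⟩ | ⟨rfl, rfl⟩
  exacts [h, h.symm]

theorem numComponents_empty : G.numComponents ∅ = Nat.card V := by
  have h : G.component ∅ = fun v => {v} := by
    funext v
    ext u
    refine ⟨fun h => ?_, fun h => h ▸ .rfl⟩
    induction h with
    | refl => rfl
    | tail _ hyz => exact absurd hyz.choose_spec.1 (Set.notMem_empty _)
  rw [numComponents, h, Set.ncard_range_of_injective Set.singleton_injective]

theorem numComponents_eq_one [Nonempty V] (h : ∀ u v, G.ReachOn S u v) :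
    G.numComponents S = 1 := by
  have : G.component S = fun _ => Set.univ := funext fun v => Set.eq_univ_of_forall (h v)
  rw [numComponents, this, Set.range_const, Set.ncard_singleton]

theorem numComponents_union_of_forall_spans (hX : ∀ e ∈ X, G.Spans S e) :
    G.numComponents (S ∪ X) = G.numComponents S := by
  rw [numComponents, component_union_of_forall_spans hX, numComponents]

theorem numComponents_insert_of_spans (h : G.Spans S e) :
    G.numComponents (insert e S) = G.numComponents S := by
  rw [← Set.union_singleton]
  exact numComponents_union_of_forall_spans (by simpa using h)

variable [Finite V]

theorem numComponents_anti (hST : S ⊆ T) : G.numComponents T ≤ G.numComponents S := by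
  rw [numComponents, range_component_eq_image hST]
  exact Set.ncard_image_le

/-- Adding an edge between two components merges exactly those two: the map from the old
components to the new ones is injective away from the component of `b`. -/
theorem numComponents_insert_add_one (h : ¬ G.Spans S e) :
    G.numComponents (insert e S) + 1 = G.numComponents S := by
  obtain ⟨a, b, -, he⟩ := G.exists_inc_eq e
  have hab : ¬ G.ReachOn S a b := (spans_iff he).not.mp h
  have hsub := Set.subset_insert e S
  set merge : Set V → Set V := fun C => ⋃ x ∈ C, G.component (insert e S) x
  set R := Set.range (G.component S)
  have hrange : Set.range (G.component (insert e S)) = merge '' R := range_component_eq_image hsub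
  have hinj : Set.InjOn merge (R \ {G.component S b}) := by
    rintro _ ⟨⟨u, rfl⟩, hu⟩ _ ⟨⟨v, rfl⟩, hv⟩ huv
    rw [Set.mem_singleton_iff, component_eq_component_iff] at hu hv
    simp only [merge, ← component_eq_biUnion hsub, component_eq_component_iff] at huv ⊢
    rcases huv.of_insert he with huv | ⟨hua | hub, hav | hbv⟩
    exacts [huv, hua.trans hav, absurd hbv.symm hv, absurd hub hu, absurd hub hu]
  have himage : merge '' R = merge '' (R \ {G.component S b}) := by
    refine subset_antisymm ?_ (Set.image_mono Set.sdiff_subset)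
    rintro _ ⟨_, ⟨v, rfl⟩, rfl⟩
    by_cases hv : G.component S v = G.component S b
    · have hba : G.component S a ≠ G.component S b :=
        fun h => hab (component_eq_component_iff.mp h)
      refine ⟨G.component S a, ⟨⟨a, rfl⟩, hba⟩, ?_⟩
      simp only [merge, hv, ← component_eq_biUnion hsub, component_eq_component_iff]
      exact reachOn_of_inc_eq (Set.mem_insert e S) he
    · exact ⟨_, ⟨⟨v, rfl⟩, hv⟩, rfl⟩
  rw [numComponents, hrange, himage, hinj.ncard_image,
    Set.ncard_sdiff_singleton_add_one (Set.mem_range_self b), numComponents]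

end Components

section Forests

variable {S T X Z Ω : Set E} {e : E}

/-- Every edge set has `S.ncard + G.numComponents S ≥ Nat.card V`, with equality exactly for
the acyclic ones (which in particular contain no parallel edges). -/
def IsForest (G : Multigraph V E) (S : Set E) : Prop :=
  S.ncard + G.numComponents S = Nat.card V

theorem isForest_empty : G.IsForest ∅ := by
  simp [IsForest, numComponents_empty]

theorem IsForest.isTree_univ [Nonempty V] (hS : G.IsForest S)
    (hconn : ∀ u v, G.ReachOn S u v) : G.IsTree Set.univ S where
  nonempty := Set.univ_nonempty
  edges_in _ _ _ _ := trivial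
  conn u _ v _ := hconn u v
  card_eq := by
    rw [Set.ncard_univ, ← hS, numComponents_eq_one hconn]

variable [Finite V]

theorem numComponents_add_insert_le (hZX : Z ⊆ X) (e : E) :
    G.numComponents X + G.numComponents (insert e Z) ≤
      G.numComponents Z + G.numComponents (insert e X) := by
  by_cases hZ : G.Spans Z e
  · rw [numComponents_insert_of_spans hZ, numComponents_insert_of_spans (hZ.mono hZX), add_comm]
  · have := numComponents_insert_add_one hZ
    by_cases hX : G.Spans X e
    · rw [numComponents_insert_of_spans hX]
      omega
    · have := numComponents_insert_add_one hX
      omega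

theorem numComponents_add_union_le [Finite E] (hZX : Z ⊆ X) (F : Set E) :
    G.numComponents X + G.numComponents (Z ∪ F) ≤
      G.numComponents Z + G.numComponents (X ∪ F) := by
  induction F, F.toFinite using Set.Finite.induction_on with
  | empty => simp only [Set.union_empty, add_comm, le_refl]
  | @insert e F _ _ ih =>
    have := numComponents_add_insert_le (G := G) (Set.union_subset_union_left F hZX) e
    simp only [Set.union_insert]
    omega

/-- Submodularity of the rank function `Nat.card V - numComponents` of the cycle matroid. -/
theorem numComponents_add_numComponents_le [Finite E] (X Y : Set E) :
    G.numComponents X + G.numComponents Y ≤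
      G.numComponents (X ∪ Y) + G.numComponents (X ∩ Y) := by
  have := numComponents_add_union_le (G := G) (Set.inter_subset_left : X ∩ Y ⊆ X) Y
  rwa [Set.union_eq_right.mpr Set.inter_subset_right, add_comm (G.numComponents (X ∩ Y))] at this

theorem IsForest.insert [Finite E] (hS : G.IsForest S) (he : ¬ G.Spans S e) :
    G.IsForest (insert e S) := by
  have heS : e ∉ S := fun h => he (spans_of_mem h)
  have := numComponents_insert_add_one he
  unfold IsForest at hS ⊢
  rw [Set.ncard_insert_of_notMem heS]
  omega

theorem IsForest.exists_connected_superset [Finite E] {F : Set E} (hF : G.IsForest F)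
    (hFΩ : F ⊆ Ω) (hΩ : ∀ u v, G.ReachOn Ω u v) :
    ∃ T, F ⊆ T ∧ T ⊆ Ω ∧ G.IsForest T ∧ ∀ u v, G.ReachOn T u v := by
  obtain ⟨T, hFT, ⟨hTΩ, hT⟩, hmax⟩ :=
    (Set.toFinite {T | T ⊆ Ω ∧ G.IsForest T}).exists_le_maximal ⟨hFΩ, hF⟩
  refine ⟨T, hFT, hTΩ, hT, fun u v => by_contra fun huv => ?_⟩
  obtain ⟨e, heΩ, a, b, he, ha, hb⟩ :=
    (hΩ u v).exists_inc_eq_mem_notMem (U := G.component T u) .rfl huv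
  have hspan : ¬ G.Spans T e := fun h => hb (ha.trans (h a b he))
  exact hspan (spans_of_mem (hmax ⟨Set.insert_subset heΩ hTΩ, hT.insert hspan⟩
    (Set.subset_insert e T) (Set.mem_insert e T)))

end Forests

section Coloring

variable {S : Set E} {c : V → Bool} {U A : Set V} {w a b u v : V} {e : E}

def bichromatic (G : Multigraph V E) (c : V → Bool) : Set E :=
  {e | ∀ u v, G.inc e = s(u, v) → c u ≠ c v}

theorem properOn_iff_subset_bichromatic : G.ProperOn S c ↔ S ⊆ G.bichromatic c := Iff.rfl

theorem mem_bichromatic_of_inc_eq (he : G.inc e = s(u, v)) (huv : c u ≠ c v) :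
    e ∈ G.bichromatic c := fun x y hxy => by
  rcases Sym2.eq_iff.mp (he.symm.trans hxy) with ⟨rfl, rfl⟩ | ⟨rfl, rfl⟩
  exacts [huv, huv.symm]

def bichromaticWithin (G : Multigraph V E) (U : Set V) (c : V → Bool) : Set E :=
  {e | ∃ u ∈ U, ∃ v ∈ U, G.inc e = s(u, v) ∧ c u ≠ c v}

theorem bichromaticWithin_subset : G.bichromaticWithin U c ⊆ G.bichromatic c :=
  fun _ ⟨_, _, _, _, he, huv⟩ => mem_bichromatic_of_inc_eq he huv

def IsIndepSet (G : Multigraph V E) (A : Set V) : Prop :=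
  ∀ e u v, G.inc e = s(u, v) → u ∈ A → v ∉ A

theorem IsIndepSet.mono {B : Set V} (h : G.IsIndepSet A) (hBA : B ⊆ A) : G.IsIndepSet B :=
  fun e u v he hu hv => h e u v he (hBA hu) (hBA hv)

theorem IsIndepSet.mem_bichromatic (hA : G.IsIndepSet {v | c v = true}) (ha : c a = true)
    (he : a ∈ G.inc e) : e ∈ G.bichromatic c := by
  obtain ⟨z, hz⟩ := Sym2.mem_iff_exists.mp he
  exact mem_bichromatic_of_inc_eq hz (by simpa [ha] using hA e a z hz ha)

structure IsRootedColoringOn (G : Multigraph V E) (w : V) (U : Set V) (c : V → Bool) : Prop where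
  mem : w ∈ U
  indep : G.IsIndepSet (U ∩ {v | c v = true})
  reachOn : ∀ v ∈ U, G.ReachOn (G.bichromaticWithin U c) v w

/-- The greedy step: a new vertex `b` is coloured `false` if it has a `true` neighbour in `U`
(through which it reaches `w`), and `true` otherwise (then its neighbour `a` is `false`). -/
theorem IsRootedColoringOn.exists_insert (hc : G.IsRootedColoringOn w U c)
    (he : G.inc e = s(a, b)) (ha : a ∈ U) (hb : b ∉ U) :
    ∃ c', c' w = c w ∧ G.IsRootedColoringOn w (insert b U) c' := by
  classical
  set P := ∃ e' u, G.inc e' = s(b, u) ∧ u ∈ U ∧ c u = true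
  set c' := Function.update c b (!decide P)
  have hc'U : ∀ u ∈ U, c' u = c u := fun u hu =>
    Function.update_of_ne (ne_of_mem_of_not_mem hu hb) _ _
  have hc'b : c' b = !decide P := Function.update_self b _ c
  have hwithin : G.bichromaticWithin U c ⊆ G.bichromaticWithin (insert b U) c' :=
    fun _ ⟨u, hu, v, hv, h, huv⟩ =>
      ⟨u, .inr hu, v, .inr hv, h, by rwa [hc'U u hu, hc'U v hv]⟩
  have htrue : c' b = true → ∀ e' u, G.inc e' = s(b, u) → u ∈ U → c' u = false := by
    intro hb e' u he' hu
    have hP : ¬ P := by simpa [hc'b] using hb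
    simpa [hc'U u hu] using fun hcu => hP ⟨e', u, he', hu, hcu⟩
  refine ⟨c', hc'U w hc.mem, .inr hc.mem, ?_, ?_⟩
  · rintro e u v huv ⟨rfl | hu, hcu⟩ ⟨rfl | hv, hcv⟩
    · exact ne_of_inc_eq huv rfl
    · simp [htrue hcu e v huv hv] at hcv
    · simp [htrue hcv e u (huv.trans Sym2.eq_swap) hu] at hcu
    · exact hc.indep e u v huv ⟨hu, (hc'U u hu).symm.trans hcu⟩
        ⟨hv, (hc'U v hv).symm.trans hcv⟩
  · rintro v (rfl | hv)
    · by_cases hP : P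
      · obtain ⟨e', u, he', hu, hcu⟩ := id hP
        have : e' ∈ G.bichromaticWithin (insert v U) c' :=
          ⟨v, .inl rfl, u, .inr hu, he', by simp [hc'b, hc'U u hu, hcu, hP]⟩
        exact (reachOn_of_inc_eq this he').trans ((hc.reachOn u hu).mono hwithin)
      · have hca : c a = false := by
          simpa using fun hca => hP ⟨e, a, he.trans Sym2.eq_swap, ha, hca⟩
        have : e ∈ G.bichromaticWithin (insert v U) c' :=
          ⟨a, .inr ha, v, .inl rfl, he, by simp [hc'b, hc'U a ha, hca, hP]⟩
        exact (reachOn_of_inc_eq this he).symm.trans ((hc.reachOn a ha).mono hwithin)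
    · exact (hc.reachOn v hv).mono hwithin

theorem exists_isRootedColoringOn_univ [Finite V] (hconn : G.Connected) (w : V) (lam : Bool) :
    ∃ c, c w = lam ∧ G.IsRootedColoringOn w Set.univ c := by
  have hinit : G.IsRootedColoringOn w {w} fun _ => lam :=
    ⟨rfl, fun e u v huv ⟨hu, _⟩ ⟨hv, _⟩ => ne_of_inc_eq huv (hu.trans hv.symm),
      fun v hv => hv ▸ .rfl⟩
  obtain ⟨U, ⟨c, hcw, hc⟩, hmax⟩ :=
    (Set.toFinite {U | ∃ c, c w = lam ∧ G.IsRootedColoringOn w U c}).exists_maximal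
      ⟨{w}, _, rfl, hinit⟩
  by_cases hU : U = Set.univ
  · exact hU ▸ ⟨c, hcw, hc⟩
  obtain ⟨x, hx⟩ := (Set.ne_univ_iff_exists_notMem U).mp hU
  obtain ⟨e, -, a, b, he, ha, hb⟩ := (hconn.2 w x).exists_inc_eq_mem_notMem hc.mem hx
  obtain ⟨c', hc'w, hc'⟩ := hc.exists_insert he ha hb
  exact absurd (hmax ⟨c', hc'w.trans hcw, hc'⟩ (Set.subset_insert b U) (Set.mem_insert b U)) hb

theorem exists_coloring [Finite V] (hconn : G.Connected) (w : V) (lam : Bool) :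
    ∃ c, c w = lam ∧ G.IsIndepSet {v | c v = true} ∧
      ∀ u v, G.ReachOn (G.bichromatic c) u v := by
  obtain ⟨c, hcw, hc⟩ := exists_isRootedColoringOn_univ hconn w lam
  refine ⟨c, hcw, by simpa using hc.indep, fun u v => ?_⟩
  have hreach := fun v => (hc.reachOn v trivial).mono bichromaticWithin_subset
  exact (hreach u).trans (hreach v).symm

end Coloring

section Degrees

variable {S T : Set E} {W : Set V} {e : E} {a v : V}

def edgesAt (G : Multigraph V E) (W : Set V) : Set E := {e | ∃ a ∈ W, a ∈ G.inc e}

theorem edgesAt_mono {W' : Set V} (h : W ⊆ W') : G.edgesAt W ⊆ G.edgesAt W' :=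
  fun _ ⟨a, ha, hae⟩ => ⟨a, h ha, hae⟩

@[simp] theorem edgesAt_empty : G.edgesAt ∅ = ∅ := by simp [edgesAt]

theorem edgesAt_union {W' : Set V} : G.edgesAt (W ∪ W') = G.edgesAt W ∪ G.edgesAt W' := by
  ext e
  simp only [edgesAt, Set.mem_union, Set.mem_ofPred_eq, or_and_right, exists_or]

theorem edgesAt_insert : G.edgesAt (insert a W) = {e | a ∈ G.inc e} ∪ G.edgesAt W := by
  rw [Set.insert_eq, edgesAt_union]
  simp [edgesAt]

theorem degree_le_maxDegree [Fintype V] (v : V) : G.degree v ≤ G.maxDegree :=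
  Finset.le_sup (Finset.mem_univ v)

variable [Finite E]

theorem degOn_mono (hST : S ⊆ T) (v : V) : G.degOn S v ≤ G.degOn T v :=
  Set.ncard_le_ncard fun _ he => ⟨hST he.1, he.2⟩

theorem degOn_insert (he : e ∉ S) (hv : v ∈ G.inc e) :
    G.degOn (insert e S) v = G.degOn S v + 1 := by
  rw [degOn, degOn, ← Set.ncard_insert_of_notMem (fun h => he h.1)]
  congr 1
  ext x
  simp only [Set.mem_insert_iff, Set.mem_ofPred_eq]
  constructor
  · rintro ⟨rfl | hx, hvx⟩
    exacts [.inl rfl, .inr ⟨hx, hvx⟩]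
  · rintro (rfl | ⟨hx, hvx⟩)
    exacts [⟨.inl rfl, hv⟩, ⟨.inr hx, hvx⟩]

end Degrees

section Rado

variable {Ω K : Set E} {d : V → ℕ} {W W₁ W₂ : Finset V} {a : V} {e : E}

/-- As `Nat.card V - numComponents X` is the rank of `X` in the cycle matroid,
`hallSum Ω K d W ≤ Nat.card V` says that after contracting `K`, the `Ω`-edges at `W` have rank
at least `∑ b ∈ W, d b`: Rado's condition for a forest in `Ω` with `d b` edges at each `b`. -/
noncomputable def hallSum (G : Multigraph V E) (Ω K : Set E) (d : V → ℕ) (W : Finset V) :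
    ℕ :=
  G.numComponents (Ω ∩ G.edgesAt W ∪ K) + K.ncard + ∑ b ∈ W, d b

def HallCondition (G : Multigraph V E) (Ω K : Set E) (d : V → ℕ) : Prop :=
  ∀ W, G.hallSum Ω K d W ≤ Nat.card V

theorem inter_edgesAt_union_mono {W W' : Set V} (h : W ⊆ W') :
    Ω ∩ G.edgesAt W ∪ K ⊆ Ω ∩ G.edgesAt W' ∪ K :=
  Set.union_subset_union_left K (Set.inter_subset_inter_right Ω (edgesAt_mono h))

theorem hallSum_empty (hK : G.IsForest K) : G.hallSum Ω K d ∅ = Nat.card V := by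
  simp only [hallSum, Finset.coe_empty, edgesAt_empty, Set.inter_empty, Set.empty_union,
    Finset.sum_empty, add_zero]
  rw [add_comm]
  exact hK

theorem HallCondition.hallSum_union [Finite V] [Finite E] [DecidableEq V]
    (hH : G.HallCondition Ω K d) (h₁ : G.hallSum Ω K d W₁ = Nat.card V)
    (h₂ : G.hallSum Ω K d W₂ = Nat.card V) :
    G.hallSum Ω K d (W₁ ∪ W₂) = Nat.card V := by
  have hsubmod := numComponents_add_numComponents_le (G := G)
    (Ω ∩ G.edgesAt W₁ ∪ K) (Ω ∩ G.edgesAt W₂ ∪ K)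
  have hunion : Ω ∩ G.edgesAt W₁ ∪ K ∪ (Ω ∩ G.edgesAt W₂ ∪ K) =
      Ω ∩ G.edgesAt ↑(W₁ ∪ W₂) ∪ K := by
    rw [Finset.coe_union, edgesAt_union]
    ext
    simp only [Set.mem_union, Set.mem_inter_iff]
    tauto
  have hinter : Ω ∩ G.edgesAt ↑(W₁ ∩ W₂) ∪ K ⊆
      (Ω ∩ G.edgesAt W₁ ∪ K) ∩ (Ω ∩ G.edgesAt W₂ ∪ K) :=
    Set.subset_inter (inter_edgesAt_union_mono (by simp)) (inter_edgesAt_union_mono (by simp))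
  have := numComponents_anti (G := G) hinter
  have := hH (W₁ ∪ W₂)
  have := hH (W₁ ∩ W₂)
  have := Finset.sum_union_inter (s₁ := W₁) (s₂ := W₂) (f := d)
  unfold hallSum at *
  rw [hunion] at hsubmod
  omega

theorem HallCondition.hallSum_biUnion [Finite V] [Finite E] [DecidableEq V] {ι : Type}
    (hH : G.HallCondition Ω K d) (hK : G.IsForest K) (s : Finset ι) (W : ι → Finset V)
    (hW : ∀ i ∈ s, G.hallSum Ω K d (W i) = Nat.card V) :
    G.hallSum Ω K d (s.biUnion W) = Nat.card V := by
  classical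
  induction s using Finset.induction_on with
  | empty => exact hallSum_empty hK
  | insert i s _ ih =>
    rw [Finset.biUnion_insert]
    exact hH.hallSum_union (hW i (s.mem_insert_self i))
      (ih fun j hj => hW j (Finset.mem_insert_of_mem hj))

/-- If every `Ω`-edge at `a` were spanned modulo some tight set avoiding `a`, the union of these
tight sets would be tight and adding `a` to it would violate Hall's condition. -/
theorem HallCondition.exists_not_spans [Finite V] [Fintype E] [DecidableEq V]
    (hH : G.HallCondition Ω K d) (hK : G.IsForest K) (ha : 0 < d a) :
    ∃ e ∈ Ω, a ∈ G.inc e ∧ ∀ W, a ∉ W → G.hallSum Ω K d W = Nat.card V →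
      ¬ G.Spans (Ω ∩ G.edgesAt W ∪ K) e := by
  by_contra! h
  choose! W haW hW hspans using fun e (he : e ∈ {e | e ∈ Ω ∧ a ∈ G.inc e}) => h e he.1 he.2
  classical
  set Wa := (Finset.univ.filter (· ∈ {e | e ∈ Ω ∧ a ∈ G.inc e})).biUnion W
  have hWa : G.hallSum Ω K d Wa = Nat.card V :=
    hH.hallSum_biUnion hK _ W fun e he => hW e (Finset.mem_filter.mp he).2
  have haWa : a ∉ Wa := by
    simpa [Wa] using fun e he hae => haW e ⟨he, hae⟩
  have hspans : ∀ e ∈ Ω ∩ {e | a ∈ G.inc e}, G.Spans (Ω ∩ G.edgesAt Wa ∪ K) e := by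
    refine fun e he => (hspans e he).mono (inter_edgesAt_union_mono ?_)
    exact Finset.coe_subset.mpr (Finset.subset_biUnion_of_mem W (by simpa using he))
  have hinsert : Ω ∩ G.edgesAt ↑(insert a Wa) ∪ K =
      Ω ∩ G.edgesAt Wa ∪ K ∪ Ω ∩ {e | a ∈ G.inc e} := by
    rw [Finset.coe_insert, edgesAt_insert]
    ext
    simp only [Set.mem_union, Set.mem_inter_iff]
    tauto
  have := hH (insert a Wa)
  rw [hallSum, hinsert, numComponents_union_of_forall_spans hspans,
    Finset.sum_insert haWa] at this
  rw [hallSum] at hWa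
  omega

theorem HallCondition.insert_update [Finite V] [Finite E] [DecidableEq V]
    (hH : G.HallCondition Ω K d) (ha : 0 < d a) (heK : e ∉ K) (heΩ : e ∈ Ω)
    (hae : a ∈ G.inc e)
    (he : ∀ W, a ∉ W → G.hallSum Ω K d W = Nat.card V →
      ¬ G.Spans (Ω ∩ G.edgesAt W ∪ K) e) :
    G.HallCondition Ω (insert e K) (Function.update d a (d a - 1)) := by
  intro W
  have hHW := hH W
  have hloose :
      a ∉ W → G.Spans (Ω ∩ G.edgesAt W ∪ K) e → G.hallSum Ω K d W < Nat.card V :=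
    fun haW hspans => hHW.lt_of_ne fun h => he W haW h hspans
  unfold hallSum at hHW hloose ⊢
  rw [Set.ncard_insert_of_notMem heK]
  by_cases haW : a ∈ W
  · have : Ω ∩ G.edgesAt W ∪ insert e K = Ω ∩ G.edgesAt W ∪ K :=
      Set.union_insert.trans (Set.insert_eq_of_mem (.inl ⟨heΩ, a, haW, hae⟩))
    rw [this, Finset.sum_update_of_mem haW]
    rw [Finset.sum_eq_add_sum_sdiff_singleton_of_mem haW] at hHW
    omega
  · rw [Finset.sum_update_of_notMem haW, Set.union_insert]
    by_cases hspans : G.Spans (Ω ∩ G.edgesAt W ∪ K) e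
    · have := hloose haW hspans
      rw [numComponents_insert_of_spans hspans]
      omega
    · have := numComponents_insert_add_one hspans
      omega

/-- Rado's theorem for the cycle matroid, with vertex demands `d`: each step commits an edge at
a vertex of positive demand that keeps Hall's condition. -/
theorem HallCondition.exists_isForest [Fintype V] [Fintype E] [DecidableEq V]
    (hH : G.HallCondition Ω K d) (hK : G.IsForest K) (hKΩ : K ⊆ Ω) :
    ∃ F, K ⊆ F ∧ F ⊆ Ω ∧ G.IsForest F ∧ ∀ v, d v ≤ G.degOn (F \ K) v := by
  obtain ⟨N, hN⟩ : ∃ N, ∑ v, d v = N := ⟨_, rfl⟩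
  induction N generalizing d K with
  | zero =>
    exact ⟨K, subset_rfl, hKΩ, hK, fun v => by simp [Finset.sum_eq_zero_iff.mp hN v]⟩
  | succ N ih =>
    obtain ⟨a, -, ha⟩ := Finset.exists_ne_zero_of_sum_ne_zero (hN.trans_ne N.succ_ne_zero)
    replace ha := Nat.pos_of_ne_zero ha
    obtain ⟨e, heΩ, hae, he⟩ := hH.exists_not_spans hK ha
    have heK : ¬ G.Spans K e := by
      simpa using he ∅ (Finset.notMem_empty a) (hallSum_empty hK)
    have heK' : e ∉ K := fun h => heK (spans_of_mem h)
    have hsum : ∑ v, Function.update d a (d a - 1) v = N := by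
      rw [Finset.sum_update_of_mem (Finset.mem_univ a)]
      rw [Finset.sum_eq_add_sum_sdiff_singleton_of_mem (Finset.mem_univ a)] at hN
      omega
    obtain ⟨F, hKF, hFΩ, hF, hdF⟩ :=
      ih (hH.insert_update ha heK' heΩ hae he) (hK.insert heK)
        (Set.insert_subset heΩ hKΩ) hsum
    refine ⟨F, (Set.subset_insert e K).trans hKF, hFΩ, hF, fun v => ?_⟩
    have hv := hdF v
    by_cases hva : v = a
    · have hdiff : F \ K = insert e (F \ insert e K) := by
        ext x
        by_cases hx : x = e
        · simp [hx, hKF (Set.mem_insert e K), heK']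
        · simp [hx]
      rw [hva, Function.update_self] at hv
      rw [hva, hdiff, degOn_insert (fun h => h.2 (Set.mem_insert e K)) hae]
      omega
    · have := degOn_mono (G := G) (Set.sdiff_subset_sdiff_right (Set.subset_insert e K) :
        F \ insert e K ⊆ F \ K) v
      rw [Function.update_of_ne hva] at hv
      omega

end Rado

section Counting

theorem numComponents_add_two_mul_card_le [Fintype V] {S : Set E} (W : Finset V)
    (h : ∀ x, (↑W ∩ G.component S x).ncard < (G.component S x \ ↑W).ncard) :
    G.numComponents S + 2 * W.card ≤ Nat.card V := by
  classical
  have hR := Set.finite_range (G.component S)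
  have hfiber : ∀ X : Finset V,
      X.card = ∑ C ∈ hR.toFinset, (X.filter (G.component S · = C)).card :=
    fun X => Finset.card_eq_sum_card_fiberwise fun y _ => by simp
  have hclass : ∀ (X : Finset V) x,
      (X.filter (G.component S · = G.component S x)).card = (↑X ∩ G.component S x).ncard := by
    intro X x
    rw [← Set.ncard_coe_finset, Finset.coe_filter]
    congr 1
    ext y
    exact and_congr_right fun _ => component_eq_component_iff.trans reachOn_comm
  have hle : ∑ C ∈ hR.toFinset, ((W.filter (G.component S · = C)).card + 1) ≤
      ∑ C ∈ hR.toFinset, (Wᶜ.filter (G.component S · = C)).card := by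
    refine Finset.sum_le_sum fun C hC => ?_
    obtain ⟨x, rfl⟩ := hR.mem_toFinset.mp hC
    rw [hclass, hclass, Finset.coe_compl, ← Set.sdiff_eq_compl_inter]
    exact h x
  rw [Finset.sum_add_distrib, ← hfiber, ← hfiber, Finset.sum_const, smul_eq_mul, mul_one] at hle
  have := Finset.card_compl W
  rw [numComponents, Set.ncard_eq_toFinset_card _ hR, Nat.card_eq_fintype_card]
  omega

variable {A B W : Finset V}

def incidenceFinset [Fintype E] [DecidableEq V] (G : Multigraph V E) (v : V) : Finset E :=
  Finset.univ.filter (v ∈ G.inc ·)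

theorem card_incidenceFinset [Fintype E] [DecidableEq V] (v : V) :
    (G.incidenceFinset v).card = G.degree v := by
  rw [degree, degOn, ← Set.ncard_coe_finset]
  congr 1
  ext
  simp [incidenceFinset]

theorem IsIndepSet.card_biUnion_incidenceFinset [Fintype E] [DecidableEq V] [DecidableEq E]
    (hA : G.IsIndepSet A) :
    (A.biUnion G.incidenceFinset).card = ∑ a ∈ A, G.degree a := by
  rw [Finset.card_biUnion]
  · exact Finset.sum_congr rfl fun a _ => card_incidenceFinset a
  · intro a ha b hb hab
    refine Finset.disjoint_left.mpr fun e hea heb => ?_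
    simp only [incidenceFinset, Finset.mem_filter, Finset.mem_univ, true_and] at hea heb
    exact hA e a b ((Sym2.mem_and_mem_iff hab).mp ⟨hea, heb⟩) ha hb

/-- Double counting: the `Δ * #A` edges at `A` are spread over `B`, at most `Δ` per vertex. -/
theorem IsIndepSet.forall_degree_eq_of_card_le [Fintype V] [Fintype E] (hA : G.IsIndepSet A)
    (hAΔ : ∀ a ∈ A, G.degree a = G.maxDegree)
    (hAB : ∀ e ∈ G.edgesAt A, ∃ z ∈ B, z ∈ G.inc e)
    (hBA : B.card ≤ A.card) :
    ∀ z ∈ B, G.degree z = G.maxDegree ∧ ∀ e, z ∈ G.inc e → e ∈ G.edgesAt A := by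
  classical
  set Δ := G.maxDegree
  set D := A.biUnion G.incidenceFinset
  have hD : ∀ e, e ∈ D ↔ e ∈ G.edgesAt A := by simp [D, incidenceFinset, edgesAt]
  have hle : ∀ z ∈ B, (G.incidenceFinset z ∩ D).card ≤ Δ := fun z _ =>
    (Finset.card_le_card Finset.inter_subset_left).trans
      ((card_incidenceFinset z).trans_le (degree_le_maxDegree z))
  have hcover : D.card ≤ ∑ z ∈ B, (G.incidenceFinset z ∩ D).card := by
    refine (Finset.card_le_card fun e he => ?_).trans Finset.card_biUnion_le
    obtain ⟨z, hzB, hze⟩ := hAB e ((hD e).mp he)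
    exact Finset.mem_biUnion.mpr ⟨z, hzB, by simp [incidenceFinset, hze, he]⟩
  have hfull : ∀ z ∈ B, (G.incidenceFinset z ∩ D).card = Δ := by
    refine (Finset.sum_eq_sum_iff_of_le hle).mp (le_antisymm (Finset.sum_le_sum hle) ?_)
    calc ∑ _ ∈ B, Δ = B.card * Δ := by rw [Finset.sum_const, smul_eq_mul]
      _ ≤ ∑ a ∈ A, G.degree a := by
        rw [Finset.sum_congr rfl hAΔ, Finset.sum_const, smul_eq_mul]
        exact Nat.mul_le_mul_right Δ hBA
      _ = D.card := hA.card_biUnion_incidenceFinset.symm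
      _ ≤ _ := hcover
  intro z hz
  have hsub : G.incidenceFinset z ∩ D = G.incidenceFinset z :=
    Finset.eq_of_subset_of_card_le Finset.inter_subset_left
      (by rw [hfull z hz, card_incidenceFinset]; exact degree_le_maxDegree z)
  refine ⟨le_antisymm (degree_le_maxDegree z) ?_, fun e hze => (hD e).mp ?_⟩
  · rw [← card_incidenceFinset, ← hsub, hfull z hz]
  · have : e ∈ G.incidenceFinset z := by simp [incidenceFinset, hze]
    rw [← hsub] at this
    exact (Finset.mem_inter.mp this).2

theorem IsIndepSet.isBipartite {W : Set V} (hW : G.IsIndepSet W) (h : ∀ e, e ∈ G.edgesAt W) :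
    G.IsBipartite := by
  classical
  refine ⟨fun v => decide (v ∈ W), fun e _ u v he => ?_⟩
  obtain ⟨a, ha, hae⟩ := h e
  rcases Sym2.mem_iff.mp (he ▸ hae) with rfl | rfl
  · simp [ha, hW e _ v he ha]
  · simp [ha, hW e _ u (he.trans Sym2.eq_swap) ha]

/-- Within a component of the edges at `W`, the vertices outside `W` outnumber those in `W`:
otherwise double counting makes the component a `Δ`-regular graph with bipartition
`(W, Wᶜ)` that is closed under adjacency, hence all of `G`. -/
theorem card_inter_component_lt [Fintype V] [Fintype E] (hconn : G.Connected)
    (hG : ¬ (G.IsRegular ∧ G.IsBipartite)) (hW : G.IsIndepSet W)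
    (hWΔ : ∀ a ∈ W, G.degree a = G.maxDegree) (x : V) :
    (↑W ∩ G.component (G.edgesAt W) x).ncard < (G.component (G.edgesAt W) x \ ↑W).ncard := by
  classical
  set S := G.edgesAt W
  set A := W.filter (G.ReachOn S x ·)
  set B := Wᶜ.filter (G.ReachOn S x ·)
  have hA : (↑A : Set V) = ↑W ∩ G.component S x := by ext; simp [A, component]
  have hB : (↑B : Set V) = G.component S x \ ↑W := by ext; simp [B, component, and_comm]
  rw [← hA, ← hB, Set.ncard_coe_finset, Set.ncard_coe_finset]
  by_contra! hBA
  have hAW : (A : Set V) ⊆ W := Finset.coe_subset.mpr (Finset.filter_subset _ _)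
  have hAB : ∀ e ∈ G.edgesAt A, ∃ z ∈ B, z ∈ G.inc e := by
    rintro e ⟨a, ha, hae⟩
    obtain ⟨z, hz⟩ := Sym2.mem_iff_exists.mp hae
    obtain ⟨haW, hxa⟩ := Finset.mem_filter.mp ha
    refine ⟨z, Finset.mem_filter.mpr ⟨Finset.mem_compl.mpr (hW e a z hz haW), ?_⟩,
      hz ▸ Sym2.mem_mk_right a z⟩
    exact hxa.trans (reachOn_of_inc_eq ⟨a, haW, hae⟩ hz)
  have hBfull := (hW.mono hAW).forall_degree_eq_of_card_le (fun a ha => hWΔ a (hAW ha)) hAB hBA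
  have hS : ∀ e u, u ∈ G.inc e → G.ReachOn S x u → e ∈ S := by
    intro e u hu hxu
    by_cases huW : u ∈ W
    · exact ⟨u, huW, hu⟩
    · exact edgesAt_mono hAW ((hBfull u (by simp [B, huW, hxu])).2 e hu)
  have hx : ∀ v, G.ReachOn S x v := by
    have := hconn.eq_univ_of_closed (U := G.component S x) ⟨x, .rfl⟩ fun e u v he hu =>
      ReachOn.trans hu (reachOn_of_inc_eq (hS e u (he ▸ Sym2.mem_mk_left u v) hu) he)
    exact fun v => (this.symm ▸ Set.mem_univ v : v ∈ G.component S x)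
  refine hG ⟨⟨G.maxDegree, fun v => ?_⟩, hW.isBipartite fun e => ?_⟩
  · by_cases hv : v ∈ W
    exacts [hWΔ v hv, (hBfull v (by simp [B, hv, hx v])).1]
  · obtain ⟨u, v, -, he⟩ := G.exists_inc_eq e
    exact hS e u (he ▸ Sym2.mem_mk_left u v) (hx u)

theorem hallCondition_bichromatic [Fintype V] [Fintype E] (hconn : G.Connected)
    (hG : ¬ (G.IsRegular ∧ G.IsBipartite)) {c : V → Bool}
    (hc : G.IsIndepSet {v | c v = true}) :
    G.HallCondition (G.bichromatic c) ∅
      (fun v => if c v = true ∧ G.degree v = G.maxDegree then 2 else 0) := by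
  classical
  intro W
  set W' := W.filter fun v => c v = true ∧ G.degree v = G.maxDegree
  have hW' : G.IsIndepSet W' := hc.mono fun v hv => (Finset.mem_filter.mp hv).2.1
  have hsum :
      ∑ b ∈ W, (if c b = true ∧ G.degree b = G.maxDegree then 2 else 0) = 2 * W'.card := by
    rw [Finset.sum_ite, Finset.sum_const_zero, add_zero, Finset.sum_const, smul_eq_mul, mul_comm]
  have hedges : G.edgesAt W' ⊆ G.bichromatic c ∩ G.edgesAt W ∪ ∅ := by
    rintro e ⟨a, ha, hae⟩
    obtain ⟨haW, hca, -⟩ := Finset.mem_filter.mp ha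
    exact .inl ⟨hc.mem_bichromatic hca hae, a, haW, hae⟩
  have := numComponents_anti (G := G) hedges
  have := numComponents_add_two_mul_card_le W'
    (card_inter_component_lt hconn hG hW' fun a ha => (Finset.mem_filter.mp ha).2.2)
  rw [hallSum, Set.ncard_empty, hsum]
  omega

end Counting

end Multigraph

/-- Every connected multigraph `G` that is not a regular
bipartite graph has, for every vertex `w` and every `lam ∈ {0,1}` (here `false`
encodes type 0 and `true` encodes type 1), a spanning weakly even
`(w, lam)`-tree: a spanning tree `T` (with edge set `S`) such that in the
bipartition `c` of `T` in which `w` has type `lam`, every leaf of `T` whose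
degree in `G` equals `Δ(G)` has type 0. -/
theorem spanning_weakly_even_tree {V E : Type} [Fintype V] [Fintype E]
    (G : Multigraph V E) (hconn : G.Connected)
    (hG : ¬ (G.IsRegular ∧ G.IsBipartite)) (w : V) (lam : Bool) :
    ∃ (S : Set E) (c : V → Bool),
      G.IsTree Set.univ S ∧
      G.ProperOn S c ∧
      c w = lam ∧
      ∀ v : V, G.IsLeaf S v → G.degree v = G.maxDegree → c v = false := by
  classical
  have := hconn.1
  obtain ⟨c, hcw, hc, hΩ⟩ := Multigraph.exists_coloring hconn w lam
  have hH := Multigraph.hallCondition_bichromatic hconn hG hc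
  obtain ⟨F, -, hFΩ, hF, hdeg⟩ :=
    hH.exists_isForest Multigraph.isForest_empty (Set.empty_subset _)
  obtain ⟨T, hFT, hTΩ, hT, hTconn⟩ := hF.exists_connected_superset hFΩ hΩ
  refine ⟨T, c, hT.isTree_univ hTconn, Multigraph.properOn_iff_subset_bichromatic.mpr hTΩ, hcw,
    fun v hleaf hv => ?_⟩
  by_contra hcv
  have h2 := hdeg v
  rw [Set.sdiff_empty, if_pos ⟨Bool.not_eq_false _ ▸ hcv, hv⟩] at h2
  have := Multigraph.degOn_mono (G := G) hFT v
  rw [Multigraph.IsLeaf] at hleaf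
  omega
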